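/- arXiv:2311.18030 — 7 statements merged into one kernel-verified Lean document; each statement's English description precedes it below -/
import Mathlib

section
/- For a finite graph with all vertex degrees positive, the bond-scattering matrix S = 2 δ_s D^{-1} δ_t* − τ (acting on C^{2m}, where D = diag(d_v) is the degree matrix) satisfies τ S τ = S* = S^{-1}; in particular S is unitary. -/
open Matrix BigOperators
open scoped Classical Kronecker

noncomputable section

variable {V E : Type*} [Fintype V] [Fintype E] [DecidableEq V] [DecidableEq E]

/-- Incidence indicator matrix: entry `(v, e)` is `1` iff `f e = v`. -/
def incMat (f : E → V) : Matrix V E ℂ :=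
  Matrix.of fun v e => if f e = v then 1 else 0

/-- Edge-reversal permutation matrix. -/
def revMat (rev : E → E) : Matrix E E ℂ :=
  Matrix.of fun e f => if f = rev e then 1 else 0

/-- Degree of a vertex (number of oriented edges terminating there). -/
def deg (t : E → V) (v : V) : ℕ :=
  Finset.card (Finset.univ.filter fun e => t e = v)

/-- Diagonal degree matrix. -/
def degMat (t : E → V) : Matrix V V ℂ :=
  Matrix.diagonal fun v => (deg t v : ℂ)

/-- The bond-scattering matrix `S = 2 δ_s D⁻¹ δ_t* − τ`. -/
def bondS (s t : E → V) (rev : E → E) : Matrix E E ℂ :=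
  (2 : ℂ) • ((incMat s).transpose * (degMat t)⁻¹ * incMat t) - revMat rev

lemma incMat_conjTranspose (f : E → V) : (incMat f)ᴴ = (incMat f)ᵀ := by
  ext e v
  simp only [conjTranspose_apply, transpose_apply, incMat, of_apply]
  split_ifs <;> simp

lemma incMat_transpose_conjTranspose (f : E → V) : ((incMat f)ᵀ)ᴴ = incMat f := by
  ext v e
  simp only [conjTranspose_apply, transpose_apply, incMat, of_apply]
  split_ifs <;> simp

lemma revMat_conjTranspose (rev : E → E) (hrev : Function.Involutive rev) :
    (revMat rev)ᴴ = revMat rev := by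
  ext e f
  have h : (e = rev f) ↔ (f = rev e) :=
    ⟨fun h => by rw [h, hrev], fun h => by rw [h, hrev]⟩
  simp only [conjTranspose_apply, revMat, of_apply, h]
  split_ifs <;> simp

lemma revMat_mul_self (rev : E → E) (hrev : Function.Involutive rev) :
    revMat rev * revMat rev = 1 := by
  ext e f
  simp only [mul_apply, revMat, of_apply, one_apply, ite_mul, one_mul, zero_mul]
  rw [Finset.sum_ite_eq' Finset.univ (rev e)]
  simp [hrev e, eq_comm]

lemma incMat_mul_revMat (f : E → V) (rev : E → E) (hrev : Function.Involutive rev) :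
    incMat f * revMat rev = incMat (f ∘ rev) := by
  ext v e
  simp only [mul_apply, incMat, revMat, of_apply, Function.comp, mul_ite, mul_one, mul_zero]
  have : ∀ g : E, (e = rev g) ↔ (g = rev e) :=
    fun g => ⟨fun h => by rw [h, hrev], fun h => by rw [h, hrev]⟩
  simp only [this]
  rw [Finset.sum_ite_eq' Finset.univ (rev e)]
  simp

lemma revMat_mul_transpose (f : E → V) (rev : E → E) :
    revMat rev * (incMat f)ᵀ = (incMat (f ∘ rev))ᵀ := by
  ext e v
  simp only [mul_apply, incMat, revMat, of_apply, transpose_apply, Function.comp,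
    ite_mul, one_mul, zero_mul]
  rw [Finset.sum_ite_eq' Finset.univ (rev e)]
  simp

lemma incMat_mul_self_transpose (f : E → V) :
    incMat f * (incMat f)ᵀ = Matrix.diagonal fun v => (deg f v : ℂ) := by
  ext v w
  by_cases h : v = w
  · subst h
    simp only [mul_apply, incMat, of_apply, transpose_apply, diagonal_apply_eq, deg]
    have h1 : ∀ e : E, (if f e = v then (1:ℂ) else 0) * (if f e = v then 1 else 0)
        = if f e = v then 1 else 0 := fun e => by split_ifs <;> simp
    simp_rw [h1]
    rw [Finset.sum_boole]
  · rw [diagonal_apply_ne _ h]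
    simp only [mul_apply, incMat, of_apply, transpose_apply]
    apply Finset.sum_eq_zero
    intro e _
    split_ifs with h1 h2 <;> simp_all

lemma deg_s_eq (s t : E → V) (rev : E → E) (hrev : Function.Involutive rev)
    (hsr : ∀ e, s (rev e) = t e) (htr : ∀ e, t (rev e) = s e) (v : V) :
    deg s v = deg t v := by
  unfold deg
  refine Finset.card_nbij' rev rev ?_ ?_ ?_ ?_ <;> intro e he <;>
    simp_all [hrev e, hsr e, htr e]

/-- `τ S τ = S* = S⁻¹`; in particular `S` is unitary. -/
theorem stmt1 (s t : E → V) (rev : E → E) (hrev : Function.Involutive rev)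
    (hne : ∀ e, rev e ≠ e)
    (hsr : ∀ e, s (rev e) = t e) (htr : ∀ e, t (rev e) = s e)
    (hd : ∀ v, 0 < deg t v) :
    revMat rev * bondS s t rev * revMat rev = (bondS s t rev)ᴴ ∧
      (bondS s t rev)ᴴ * bondS s t rev = 1 ∧
      bondS s t rev * (bondS s t rev)ᴴ = 1 := by
  have hDN : degMat t * Matrix.diagonal (fun v => ((deg t v : ℂ))⁻¹) = 1 := by
    rw [degMat, diagonal_mul_diagonal]
    have h : (fun v => (deg t v : ℂ) * ((deg t v : ℂ))⁻¹) = fun _ => 1 := by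
      funext v; exact mul_inv_cancel₀ (Nat.cast_ne_zero.mpr (hd v).ne')
    rw [h, diagonal_one]
  have hD : (degMat t)⁻¹ = Matrix.diagonal (fun v => ((deg t v : ℂ))⁻¹) :=
    Matrix.inv_eq_right_inv hDN
  set τ := revMat rev with hτdef
  set C := incMat s with hCdef
  set B := incMat t with hBdef
  have hND : (degMat t)⁻¹ * degMat t = 1 := by
    rw [hD, degMat, diagonal_mul_diagonal]
    have h : (fun v => ((deg t v : ℂ))⁻¹ * (deg t v : ℂ)) = fun _ => 1 := by
      funext v; exact inv_mul_cancel₀ (Nat.cast_ne_zero.mpr (hd v).ne')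
    rw [h, diagonal_one]
  have hDN' : degMat t * (degMat t)⁻¹ = 1 := by rw [hD]; exact hDN
  have hNher : (degMat t)⁻¹ᴴ = (degMat t)⁻¹ := by
    rw [hD]
    ext v w
    simp only [conjTranspose_apply, diagonal_apply]
    split_ifs with h1 h2 <;> simp_all [eq_comm]
  have hτA : τ * Cᵀ = Bᵀ := by
    rw [hτdef, hCdef, revMat_mul_transpose]
    rw [show s ∘ rev = t from funext hsr, hBdef]
  have hτBt : τ * Bᵀ = Cᵀ := by
    rw [hτdef, hBdef, revMat_mul_transpose]
    rw [show t ∘ rev = s from funext htr, hCdef]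
  have hBτ : B * τ = C := by
    rw [hτdef, hBdef, incMat_mul_revMat _ _ hrev]
    rw [show t ∘ rev = s from funext htr, hCdef]
  have hCτ : C * τ = B := by
    rw [hτdef, hCdef, incMat_mul_revMat _ _ hrev]
    rw [show s ∘ rev = t from funext hsr, hBdef]
  have hττ : τ * τ = 1 := revMat_mul_self rev hrev
  have hτH : τᴴ = τ := revMat_conjTranspose rev hrev
  have hBB1 : ∀ X : Matrix V E ℂ, B * (Bᵀ * X) = degMat t * X := fun X => by
    rw [← Matrix.mul_assoc, hBdef, incMat_mul_self_transpose, degMat]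
  have hCC1 : ∀ X : Matrix V E ℂ, C * (Cᵀ * X) = degMat t * X := fun X => by
    have hds : (fun v => ((deg s v : ℂ))) = fun v => ((deg t v : ℂ)) := by
      funext v; rw [deg_s_eq s t rev hrev hsr htr v]
    rw [← Matrix.mul_assoc, hCdef, incMat_mul_self_transpose, hds, degMat]
  have hND1 : ∀ X : Matrix V E ℂ, (degMat t)⁻¹ * (degMat t * X) = X := fun X => by
    rw [← Matrix.mul_assoc, hND, Matrix.one_mul]
  have hS : bondS s t rev = (2 : ℂ) • (Cᵀ * (degMat t)⁻¹ * B) - τ := rfl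
  have hSH : (bondS s t rev)ᴴ = (2 : ℂ) • (Bᵀ * (degMat t)⁻¹ * C) - τ := by
    rw [hS, conjTranspose_sub, conjTranspose_smul, conjTranspose_mul, conjTranspose_mul,
      hBdef, hCdef, incMat_conjTranspose, incMat_transpose_conjTranspose, hNher, hτH]
    rw [show star (2:ℂ) = 2 by norm_num, Matrix.mul_assoc]
  have h1 : (Bᵀ * (degMat t)⁻¹ * C) * (Cᵀ * (degMat t)⁻¹ * B) = Bᵀ * (degMat t)⁻¹ * B := by
    simp only [Matrix.mul_assoc]
    rw [hCC1, hND1]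
  have h2 : (Bᵀ * (degMat t)⁻¹ * C) * τ = Bᵀ * (degMat t)⁻¹ * B := by
    simp only [Matrix.mul_assoc]
    rw [hCτ]
  have h3 : τ * (Cᵀ * (degMat t)⁻¹ * B) = Bᵀ * (degMat t)⁻¹ * B := by
    rw [← Matrix.mul_assoc, ← Matrix.mul_assoc, hτA]
  have h4 : (Cᵀ * (degMat t)⁻¹ * B) * (Bᵀ * (degMat t)⁻¹ * C) = Cᵀ * (degMat t)⁻¹ * C := by
    simp only [Matrix.mul_assoc]
    rw [hBB1, hND1]
  have h5 : (Cᵀ * (degMat t)⁻¹ * B) * τ = Cᵀ * (degMat t)⁻¹ * C := by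
    simp only [Matrix.mul_assoc]
    rw [hBτ]
  have h6 : τ * (Bᵀ * (degMat t)⁻¹ * C) = Cᵀ * (degMat t)⁻¹ * C := by
    rw [← Matrix.mul_assoc, ← Matrix.mul_assoc, hτBt]
  have h7 : (Bᵀ * (degMat t)⁻¹ * B) * τ = Bᵀ * (degMat t)⁻¹ * C := by
    simp only [Matrix.mul_assoc]
    rw [hBτ]
  refine ⟨?_, ?_, ?_⟩
  · rw [hSH, hS]
    simp only [Matrix.mul_sub, Matrix.sub_mul, Matrix.mul_smul, Matrix.smul_mul]
    rw [h3, h7, hττ, Matrix.one_mul]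
  · rw [hSH, hS]
    simp only [Matrix.sub_mul, Matrix.mul_sub, Matrix.smul_mul, Matrix.mul_smul, smul_smul]
    rw [h1, h2, h3, hττ]
    module
  · rw [hSH, hS]
    simp only [Matrix.sub_mul, Matrix.mul_sub, Matrix.smul_mul, Matrix.mul_smul, smul_smul]
    rw [h4, h5, h6, hττ]
    module
end
end

section
/- Let C = (v_1 → v_2 → ⋯ → v_k → v_1) be a cycle in a finite graph using distinct oriented edges e_1, ..., e_k. Define x ∈ C^{2m} by x(e_j) = 1 for each cycle edge e_j, x(−e_j) = −1 for its reversal, and x(e) = 0 for all other oriented edges. Then S x = x, where S is the bond-scattering matrix. -/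
open Matrix BigOperators
open scoped Classical Kronecker

noncomputable section

variable {V E : Type*} [Fintype V] [Fintype E] [DecidableEq V] [DecidableEq E]

/-- The `±1` indicator vector of a simple cycle is a fixed point of the
bond-scattering matrix. -/
theorem stmt6 (s t : E → V) (rev : E → E) (hrev : Function.Involutive rev)
    (hne : ∀ e, rev e ≠ e)
    (hsr : ∀ e, s (rev e) = t e) (htr : ∀ e, t (rev e) = s e)
    (hd : ∀ v, 0 < deg t v)
    (k : ℕ) [NeZero k] (v : Fin k → V) (e : Fin k → E)
    (hv : Function.Injective v)
    (hes : ∀ j, s (e j) = v j) (het : ∀ j, t (e j) = v (j + 1))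
    (hdisj : ∀ i j, e i ≠ rev (e j)) :
    (bondS s t rev).mulVec
        (fun f => if ∃ j, f = e j then (1 : ℂ)
                  else if ∃ j, f = rev (e j) then -1 else 0)
      = fun f => if ∃ j, f = e j then (1 : ℂ)
                 else if ∃ j, f = rev (e j) then -1 else 0 := by
  classical
  set x : E → ℂ := fun f => if ∃ j, f = e j then (1 : ℂ)
                  else if ∃ j, f = rev (e j) then -1 else 0 with hxdef
  have hei : Function.Injective e := fun i j h => hv (by rw [← hes i, ← hes j, h])
  have hind : ∀ (a : Fin k → E), Function.Injective a → ∀ g : E,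
      (∑ j, if g = a j then (1:ℂ) else 0) = if ∃ j, g = a j then 1 else 0 := by
    intro a ha g
    by_cases h : ∃ j, g = a j
    · obtain ⟨j, rfl⟩ := h
      rw [if_pos ⟨j, rfl⟩]
      have : ∀ i : Fin k, (if a j = a i then (1:ℂ) else 0) = if j = i then 1 else 0 := by
        intro i
        by_cases hij : j = i
        · simp [hij]
        · rw [if_neg (fun hh => hij (ha hh)), if_neg hij]
      simp [this]
    · rw [if_neg h]
      refine Finset.sum_eq_zero fun i _ => ?_
      exact if_neg fun hh => h ⟨i, hh⟩
  have hxval : ∀ g, x g = (∑ j, if g = e j then (1:ℂ) else 0)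
      - (∑ j, if g = rev (e j) then (1:ℂ) else 0) := by
    intro g
    rw [hind e hei g, hind (fun j => rev (e j)) (fun i j h => hei (hrev.injective h)) g]
    simp only [hxdef]
    by_cases h1 : ∃ j, g = e j
    · have h2 : ¬ ∃ j, g = rev (e j) := by
        rintro ⟨j, rfl⟩; obtain ⟨i, hi⟩ := h1; exact hdisj i j hi.symm
      simp [h1, h2]
    · by_cases h2 : ∃ j, g = rev (e j)
      · simp [h1, h2]
      · simp [h1, h2]
  have hone : ∀ (c : E → ℂ) (b : E), (∑ g, c g * (if g = b then (1:ℂ) else 0)) = c b := by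
    intro c b
    rw [Finset.sum_eq_single b]
    · simp
    · intro g _ hg; simp [hg]
    · simp
  have hsum : ∀ c : E → ℂ, (∑ g, c g * x g) = (∑ j, c (e j)) - (∑ j, c (rev (e j))) := by
    intro c
    have key : ∀ a : Fin k → E,
        (∑ g, ∑ j, c g * (if g = a j then (1:ℂ) else 0)) = ∑ j, c (a j) := by
      intro a
      rw [Finset.sum_comm]
      exact Finset.sum_congr rfl fun j _ => hone c (a j)
    simp only [hxval, mul_sub, Finset.mul_sum]
    rw [Finset.sum_sub_distrib, key e, key (fun j => rev (e j))]
  have hxr : ∀ f, x (rev f) = - x f := by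
    intro f
    simp only [hxdef]
    by_cases h1 : ∃ j, f = e j
    · obtain ⟨j, rfl⟩ := h1
      have h2 : ¬ ∃ i, rev (e j) = e i := by
        rintro ⟨i, hi⟩; exact hdisj i j hi.symm
      rw [if_neg h2, if_pos (⟨j, rfl⟩ : ∃ i, rev (e j) = rev (e i)),
        if_pos (⟨j, rfl⟩ : ∃ i, e j = e i)]
    · by_cases h2 : ∃ j, f = rev (e j)
      · obtain ⟨j, rfl⟩ := h2
        rw [if_pos (⟨j, hrev (e j)⟩ : ∃ i, rev (rev (e j)) = e i), if_neg h1,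
          if_pos (⟨j, rfl⟩ : ∃ i, rev (e j) = rev (e i))]
        norm_num
      · have h3 : ¬ ∃ j, rev f = e j := by
          rintro ⟨j, hj⟩; exact h2 ⟨j, by rw [← hrev f, hj]⟩
        have h4 : ¬ ∃ j, rev f = rev (e j) := by
          rintro ⟨j, hj⟩; exact h1 ⟨j, hrev.injective hj⟩
        rw [if_neg h3, if_neg h4, if_neg h1, if_neg h2]
        norm_num
  have hinv : (degMat t)⁻¹ = Matrix.diagonal (fun w => ((deg t w : ℂ))⁻¹) := by
    apply Matrix.inv_eq_right_inv
    rw [degMat, Matrix.diagonal_mul_diagonal]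
    have hfun : (fun i => (deg t i : ℂ) * ((deg t i : ℂ))⁻¹) = fun _ => (1:ℂ) :=
      funext fun w => mul_inv_cancel₀ (Nat.cast_ne_zero.mpr (hd w).ne')
    rw [hfun, Matrix.diagonal_one]
  have hentry : ∀ f g, bondS s t rev f g =
      (if t g = s f then 2 * ((deg t (s f) : ℂ))⁻¹ else 0)
        - (if g = rev f then 1 else 0) := by
    intro f g
    simp only [bondS, Matrix.sub_apply, Matrix.smul_apply, revMat, Matrix.of_apply,
      smul_eq_mul]
    congr 1
    rw [Matrix.mul_apply]
    have key : ∀ w : V, ((incMat s).transpose * (degMat t)⁻¹) f w * incMat t w g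
        = if w = s f then (if t g = s f then ((deg t (s f) : ℂ))⁻¹ else 0) else 0 := by
      intro w
      rw [Matrix.mul_apply, hinv]
      simp only [incMat, Matrix.transpose_apply, Matrix.of_apply, Matrix.diagonal_apply]
      by_cases hw : w = s f
      · subst hw
        rw [if_pos rfl]
        have hs : (∑ u, (if s f = u then (1:ℂ) else 0)
            * (if u = s f then ((deg t u : ℂ))⁻¹ else 0)) = ((deg t (s f) : ℂ))⁻¹ := by
          rw [Finset.sum_eq_single (s f)]
          · simp
          · intro b _ hb; simp [Ne.symm hb]
          · simp
        rw [hs]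
        by_cases hg : t g = s f <;> simp [hg]
      · rw [if_neg hw]
        have hz : (∑ u, (if s f = u then (1:ℂ) else 0)
            * (if u = w then ((deg t u : ℂ))⁻¹ else 0)) = 0 := by
          refine Finset.sum_eq_zero fun u _ => ?_
          by_cases hu : u = w
          · have hns : ¬ s f = u := fun h => hw (by rw [← hu, ← h])
            rw [if_neg hns, zero_mul]
          · rw [if_neg hu, mul_zero]
        rw [hz, zero_mul]
    rw [Finset.sum_congr rfl fun w _ => key w]
    rw [Finset.sum_ite_eq' Finset.univ (s f)
      (fun _ => if t g = s f then ((deg t (s f) : ℂ))⁻¹ else 0)]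
    simp [mul_ite]
  funext f
  show (∑ g, bondS s t rev f g * x g) = x f
  simp only [hentry, sub_mul, Finset.sum_sub_distrib]
  have h1 : (∑ g, (if t g = s f then 2 * ((deg t (s f) : ℂ))⁻¹ else 0) * x g) = 0 := by
    rw [hsum]
    have hB : ∀ j : Fin k, t (rev (e j)) = v j := fun j => by rw [htr, hes]
    simp only [het, hB]
    rw [sub_eq_zero]
    exact Fintype.sum_equiv (Equiv.addRight (1 : Fin k))
      (fun j => if v (j + 1) = s f then 2 * ((deg t (s f) : ℂ))⁻¹ else 0)
      (fun j => if v j = s f then 2 * ((deg t (s f) : ℂ))⁻¹ else 0)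
      (fun j => rfl)
  have h2 : (∑ g, (if g = rev f then (1:ℂ) else 0) * x g) = x (rev f) := by
    rw [Finset.sum_eq_single (rev f)]
    · simp
    · intro b _ hb; simp [hb]
    · simp
  rw [h1, h2, hxr f]
  ring
end
end

section
/- Let G be a finite connected graph and S its bond-scattering matrix on C^{2m}. If S x = x and τ x = x (x is symmetric under edge reversal), then x is a scalar multiple of the all-ones vector. -/
open Matrix BigOperators
open scoped Classical Kronecker

noncomputable section

variable {V E : Type*} [Fintype V] [Fintype E] [DecidableEq V] [DecidableEq E]

/-- On a connected graph, a fixed vector of `S` that is symmetric under edge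
reversal is a multiple of the all-ones vector. -/
theorem stmt7 (s t : E → V) (rev : E → E) (hrev : Function.Involutive rev)
    (hne : ∀ e, rev e ≠ e)
    (hsr : ∀ e, s (rev e) = t e) (htr : ∀ e, t (rev e) = s e)
    (hd : ∀ v, 0 < deg t v)
    (hconn : ∀ a b : V, Relation.ReflTransGen (fun p q => ∃ e, s e = p ∧ t e = q) a b)
    (x : E → ℂ) (hx : (bondS s t rev).mulVec x = x)
    (hτx : (revMat rev).mulVec x = x) :
    ∃ c : ℂ, ∀ f, x f = c := by
  -- the fixed-vector equation without the reversal part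
  have hM : ((incMat s).transpose * (degMat t)⁻¹ * incMat t).mulVec x = x := by
    have h2 : (2 : ℂ) • ((incMat s).transpose * (degMat t)⁻¹ * incMat t).mulVec x
        = (2 : ℂ) • x := by
      unfold bondS at hx
      rw [Matrix.sub_mulVec, Matrix.smul_mulVec, hτx, sub_eq_iff_eq_add] at hx
      rw [hx, two_smul]
    exact smul_right_injective _ (two_ne_zero) h2
  -- inverse of degree matrix
  have hdeg : (degMat t)⁻¹ = Matrix.diagonal (fun v => ((deg t v : ℂ))⁻¹) := by
    rw [degMat, Matrix.inv_diagonal]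
    have hu : (fun v => (deg t v : ℂ)) * (fun v => ((deg t v : ℂ))⁻¹) = 1 := by
      funext v
      have h0 : (deg t v : ℂ) ≠ 0 := Nat.cast_ne_zero.mpr (hd v).ne'
      simp [mul_inv_cancel₀ h0]
    have hu' : (fun v => ((deg t v : ℂ))⁻¹) * (fun v => (deg t v : ℂ)) = 1 := by
      rw [mul_comm]; exact hu
    exact congrArg Matrix.diagonal (Ring.inverse_unit ⟨_, _, hu, hu'⟩)
  -- the local average function
  set y : V → ℂ := fun v => ((deg t v : ℂ))⁻¹ * ∑ f ∈ Finset.univ.filter (fun f => t f = v), x f with hy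
  have key : ∀ e, x e = y (s e) := by
    intro e
    have h := congrFun hM e
    rw [hdeg] at h
    rw [← Matrix.mulVec_mulVec, ← Matrix.mulVec_mulVec] at h
    simp only [Matrix.mulVec, dotProduct, incMat, Matrix.transpose_apply, Matrix.of_apply,
      Matrix.mulVec_diagonal, ite_mul, one_mul, zero_mul, Finset.sum_ite_eq,
      Finset.mem_univ, if_true] at h
    rw [← h, hy]
    simp [Matrix.diagonal_apply, ite_mul, Finset.sum_ite_eq, Finset.sum_filter]
  have hτ : ∀ e, x (rev e) = x e := by
    intro e
    have h := congrFun hτx e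
    simpa [revMat, Matrix.mulVec, dotProduct, ite_mul] using h
  have hstep : ∀ e, y (s e) = y (t e) := by
    intro e
    have h2 : x (rev e) = y (t e) := by rw [key (rev e), hsr]
    rw [← key e, ← h2, hτ]
  have hyconst : ∀ a b : V, Relation.ReflTransGen (fun p q => ∃ e, s e = p ∧ t e = q) a b →
      y a = y b := by
    intro a b h
    induction h with
    | refl => rfl
    | tail _ hbc ih =>
      obtain ⟨e, rfl, rfl⟩ := hbc
      rw [ih, hstep e]
  by_cases hE : Nonempty E
  · obtain ⟨e0⟩ := hE
    exact ⟨y (s e0), fun f => by rw [key f, hyconst _ _ (hconn (s f) (s e0))]⟩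
  · exact ⟨0, fun f => absurd ⟨f⟩ hE⟩
end
end

section
/- Let G be a finite connected graph and S its bond-scattering matrix. If S x = x and x is orthogonal to the all-ones vector, then τ x = −x. -/
open Matrix BigOperators
open scoped Classical Kronecker

noncomputable section

variable {V E : Type*} [Fintype V] [Fintype E] [DecidableEq V] [DecidableEq E]

/-- On a connected graph, a fixed vector of `S` orthogonal to the all-ones
vector is antisymmetric under edge reversal. -/
theorem stmt8 (s t : E → V) (rev : E → E) (hrev : Function.Involutive rev)
    (hne : ∀ e, rev e ≠ e)
    (hsr : ∀ e, s (rev e) = t e) (htr : ∀ e, t (rev e) = s e)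
    (hd : ∀ v, 0 < deg t v)
    (hconn : ∀ a b : V, Relation.ReflTransGen (fun p q => ∃ e, s e = p ∧ t e = q) a b)
    (x : E → ℂ) (hx : (bondS s t rev).mulVec x = x)
    (horth : ∑ f, x f = 0) :
    (revMat rev).mulVec x = -x := by
  classical
  set F : V → ℂ := fun v => ∑ f ∈ Finset.univ.filter fun f => t f = v, x f with hF
  have hdeg : ∀ v, ((deg t v : ℂ)) ≠ 0 := fun v => Nat.cast_ne_zero.mpr (hd v).ne'
  set g : V → ℂ := fun v => ((deg t v : ℂ))⁻¹ * F v with hg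
  have hinv : (degMat t)⁻¹ = Matrix.diagonal fun v => ((deg t v : ℂ))⁻¹ := by
    apply Matrix.inv_eq_right_inv
    rw [degMat, Matrix.diagonal_mul_diagonal,
      show (fun v => (deg t v : ℂ) * (deg t v : ℂ)⁻¹) = fun _ => 1 from
        funext fun v => mul_inv_cancel₀ (hdeg v), Matrix.diagonal_one]
  have hentry : ∀ e f, ((incMat s).transpose * (degMat t)⁻¹ * incMat t) e f
      = if t f = s e then ((deg t (s e) : ℂ))⁻¹ else 0 := by
    intro e f
    rw [hinv]
    simp only [Matrix.mul_apply, Matrix.transpose_apply, incMat, Matrix.of_apply,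
      Matrix.diagonal_apply, ite_mul, one_mul, zero_mul, mul_ite, mul_zero, mul_one]
    simp only [Finset.sum_ite_eq, Finset.sum_ite_eq', Finset.mem_univ, if_true]
    rcases eq_or_ne (t f) (s e) with h1 | h1
    · simp [h1]
    · simp [h1, h1.symm]
  have hrmv : ∀ e, (revMat rev).mulVec x e = x (rev e) := by
    intro e
    simp [revMat, Matrix.mulVec, dotProduct, ite_mul, one_mul, zero_mul]
  have key : ∀ e, x e + x (rev e) = 2 * g (s e) := by
    intro e
    have h := congrFun hx e
    rw [bondS, Matrix.sub_mulVec, Matrix.smul_mulVec] at h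
    have h2 : ((incMat s).transpose * (degMat t)⁻¹ * incMat t).mulVec x e
        = ((deg t (s e) : ℂ))⁻¹ * F (s e) := by
      simp only [Matrix.mulVec, dotProduct, hentry, ite_mul, zero_mul]
      rw [← Finset.sum_filter, ← Finset.mul_sum]
    simp only [Pi.sub_apply, Pi.smul_apply, smul_eq_mul] at h
    rw [h2, hrmv] at h
    simp only [hg]
    linear_combination -h
  have hstep : ∀ e, g (s e) = g (t e) := by
    intro e
    have h1 := key e
    have h2 := key (rev e)
    rw [hrev e, hsr e] at h2
    have h3 : (2:ℂ) * g (s e) = 2 * g (t e) := by linear_combination h2 - h1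
    exact mul_left_cancel₀ two_ne_zero h3
  have hrel : ∀ a b : V, Relation.ReflTransGen
      (fun p q => ∃ e, s e = p ∧ t e = q) a b → g a = g b := by
    intro a b h
    induction h with
    | refl => rfl
    | tail _ hbc ih =>
      obtain ⟨e, he1, he2⟩ := hbc
      rw [ih, ← he1, ← he2, hstep e]
  have hsum : ∑ v, F v = 0 := by
    rw [hF, ← horth]
    exact Finset.sum_fiberwise Finset.univ t x
  funext e
  rw [hrmv e]
  have hall : ∀ v, g v = g (s e) := fun v => hrel v (s e) (hconn v (s e))
  have hFg : ∀ v, F v = (deg t v : ℂ) * g v := by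
    intro v
    simp only [hg]
    rw [← mul_assoc, mul_inv_cancel₀ (hdeg v), one_mul]
  have hzero : (↑(∑ v, deg t v) : ℂ) * g (s e) = 0 := by
    push_cast
    rw [Finset.sum_mul, ← hsum]
    refine Finset.sum_congr rfl fun v _ => ?_
    rw [hFg v, hall v]
  have hpos : (0 : ℕ) < ∑ v, deg t v :=
    Finset.sum_pos' (fun _ _ => Nat.zero_le _) ⟨s e, Finset.mem_univ _, hd _⟩
  have hgz : g (s e) = 0 := by
    rcases mul_eq_zero.mp hzero with h | h
    · exact absurd h (Nat.cast_ne_zero.mpr hpos.ne')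
    · exact h
  have := key e
  rw [hgz] at this
  have : x (rev e) = -x e := by linear_combination this
  simpa using this
end
end

section
/- Every fixed vector x of the bond-scattering matrix S is a harmonic 1-form: (δ_t − δ_s) D^{-1} (δ_t* − δ_s*) x = 0. Equivalently, for each vertex v, the sum of x(e) over edges e with t(e) = v is zero and the sum over edges with s(e) = v is zero, when x ⊥ 1; and if x is proportional to the all-ones vector the identity also holds. -/
open Matrix BigOperators
open scoped Classical Kronecker

noncomputable section

variable {V E : Type*} [Fintype V] [Fintype E] [DecidableEq V] [DecidableEq E]

set_option linter.unusedSectionVars false in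
theorem tripleVec (s t : E → V) (d : V → ℂ) (x : E → ℂ) (e : E) :
    ((incMat s).transpose * Matrix.diagonal d * incMat t).mulVec x e
      = d (s e) * ∑ f ∈ Finset.univ.filter (fun f => t f = s e), x f := by
  simp only [Matrix.mulVec, Matrix.mul_apply, incMat, dotProduct, Matrix.diagonal,
    Matrix.transpose_apply, Matrix.of_apply, ite_mul, mul_ite, one_mul, zero_mul,
    mul_zero, Finset.sum_ite_eq, Finset.sum_ite_eq', Finset.mem_univ, if_true,
    Finset.mul_sum, Finset.sum_filter]
  refine Finset.sum_congr rfl fun f _ => ?_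
  by_cases h : t f = s e
  · simp [h]
  · simp [h, Ne.symm h]

/-- Every fixed vector of the bond-scattering matrix is a harmonic 1-form:
`(δ_t − δ_s) D⁻¹ (δ_t* − δ_s*) x = 0`. -/
theorem stmt9 (s t : E → V) (rev : E → E) (hrev : Function.Involutive rev)
    (hne : ∀ e, rev e ≠ e)
    (hsr : ∀ e, s (rev e) = t e) (htr : ∀ e, t (rev e) = s e)
    (hd : ∀ v, 0 < deg t v)
    (hconn : ∀ a b : V, Relation.ReflTransGen (fun p q => ∃ e, s e = p ∧ t e = q) a b)
    (x : E → ℂ) (hx : (bondS s t rev).mulVec x = x) :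
    (((incMat t).transpose - (incMat s).transpose) * (degMat t)⁻¹ *
        (incMat t - incMat s)).mulVec x = 0 := by
  set d : V → ℂ := fun v => ((deg t v : ℂ))⁻¹ with hdinv
  have hdne : ∀ v, (deg t v : ℂ) ≠ 0 := fun v => Nat.cast_ne_zero.mpr (hd v).ne'
  have hinv : (degMat t)⁻¹ = Matrix.diagonal d := by
    refine Matrix.inv_eq_right_inv ?_
    rw [degMat, Matrix.diagonal_mul_diagonal]
    have h : (fun v => (deg t v : ℂ) * d v) = fun _ => (1 : ℂ) :=
      funext fun v => mul_inv_cancel₀ (hdne v)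
    rw [h, Matrix.diagonal_one]
  set A : V → ℂ := fun v => ∑ f ∈ Finset.univ.filter (fun f => t f = v), x f with hA
  set B : V → ℂ := fun v => ∑ f ∈ Finset.univ.filter (fun f => s f = v), x f with hB
  -- the fixed point equation in coordinates
  have hxE : ∀ e, 2 * (d (s e) * A (s e)) - x (rev e) = x e := by
    intro e
    have := congrFun hx e
    rw [bondS, hinv, Matrix.sub_mulVec, Matrix.smul_mulVec] at this
    simp only [Pi.sub_apply, Pi.smul_apply, smul_eq_mul] at this
    rw [tripleVec s t d x e] at this
    simpa [revMat, Matrix.mulVec, dotProduct, Finset.sum_ite_eq', smul_eq_mul] using this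
  -- reversal bijection between out-edges and in-edges
  have hrevsum : ∀ (v : V) (g : E → ℂ),
      ∑ e ∈ Finset.univ.filter (fun e => s e = v), g (rev e)
        = ∑ e ∈ Finset.univ.filter (fun e => t e = v), g e := by
    intro v g
    refine Finset.sum_nbij' (i := fun e => rev e) (j := fun e => rev e) ?_ ?_ ?_ ?_ ?_
    · intro e he; simp_all [htr]
    · intro e he; simp_all [hsr]
    · intro e _; exact hrev e
    · intro e _; exact hrev e
    · intro e _; rfl
  have hcard : ∀ v, (Finset.univ.filter (fun e => s e = v)).card = deg t v := by
    intro v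
    rw [deg]
    refine Finset.card_nbij' (i := fun e => rev e) (j := fun e => rev e) ?_ ?_ ?_ ?_
    · intro e he; simp_all [htr]
    · intro e he; simp_all [hsr]
    · intro e _; exact hrev e
    · intro e _; exact hrev e
  -- key: B = A
  have key : ∀ v, B v = A v := by
    intro v
    have h1 : B v + A v = ∑ e ∈ Finset.univ.filter (fun e => s e = v), (x e + x (rev e)) := by
      rw [Finset.sum_add_distrib, hrevsum v x, hB, hA]
    have h2 : ∀ e ∈ Finset.univ.filter (fun e => s e = v), x e + x (rev e) = 2 * (d v * A v) := by
      intro e he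
      simp only [Finset.mem_filter] at he
      have := hxE e
      rw [he.2] at this
      linear_combination -this
    rw [Finset.sum_congr rfl h2, Finset.sum_const, hcard v, nsmul_eq_mul] at h1
    have hdv : (deg t v : ℂ) * d v = 1 := mul_inv_cancel₀ (hdne v)
    have h3 : B v + A v = 2 * A v := by
      rw [h1]
      calc ((deg t v : ℂ)) * (2 * (d v * A v)) = 2 * (((deg t v : ℂ)) * d v * A v) := by ring
        _ = 2 * A v := by rw [hdv]; ring
    linear_combination h3
  funext e
  rw [hinv, Matrix.sub_mul, Matrix.mul_sub, Matrix.sub_mul, Matrix.sub_mul,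
    Matrix.sub_mulVec, Matrix.sub_mulVec, Matrix.sub_mulVec]
  simp only [Pi.sub_apply, Pi.zero_apply]
  rw [tripleVec t t d x e, tripleVec t s d x e, tripleVec s t d x e, tripleVec s s d x e]
  have e1 : (∑ f ∈ Finset.univ.filter (fun f => t f = t e), x f) = A (t e) := rfl
  have e2 : (∑ f ∈ Finset.univ.filter (fun f => s f = t e), x f) = B (t e) := rfl
  have e3 : (∑ f ∈ Finset.univ.filter (fun f => t f = s e), x f) = A (s e) := rfl
  have e4 : (∑ f ∈ Finset.univ.filter (fun f => s f = s e), x f) = B (s e) := rfl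
  rw [e1, e2, e3, e4, key (t e), key (s e)]
  ring
end
end

section
/- For a finite connected graph, the eigenspace of the bond-scattering matrix S for eigenvalue 1 has dimension β + 1 = m − n + 2, spanned by the all-ones vector together with β independent τ-antisymmetric harmonic 1-forms. -/
/-!
Let `A` be the τ-antisymmetric 1-forms and `μ = D⁻¹ δ_t x` the mean of `x` over the edges entering
each vertex. `S x = x` says `x e + x (τ e) = 2 μ (s e)`; read at `τ e` it gives
`μ (s e) = μ (t e)`, so by connectivity `μ` is a constant `c`, and `x - c` is antisymmetric with
`δ_t (x - c) = 0`. Hence `ker (S - 1) = ℂ 1 ⊕ (A ∩ ker δ_t)`. On `A` one has `δ_s = -δ_t`, so the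
Laplacian of an antisymmetric form is `2 (μ ∘ t - μ ∘ s)`; its kernel consists of the forms of
constant mean, and that mean vanishes because `∑ x = 0`. So the harmonic antisymmetric forms are
exactly `A ∩ ker δ_t`.

For the dimension, `δ_t` maps `A` onto the functions on vertices with zero sum (unit flows along a
path from `a` to `b` give `1_b - 1_a`), so `dim (A ∩ ker δ_t) = dim A - (n - 1)`. Finally
`2 dim A = |E|`: `1 - τ` has range `A` and kernel the symmetric forms, and multiplying by a sign
`σ` with `σ ∘ τ = -σ` (an orientation) maps the symmetric forms onto `A`.
-/
open Matrix BigOperators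
open scoped Classical Kronecker

noncomputable section

variable {V E : Type*} [Fintype V] [Fintype E] [DecidableEq V] [DecidableEq E]

set_option linter.unusedSectionVars false

theorem finrank_map_add_finrank_inf_ker {K M N : Type*} [Field K] [AddCommGroup M] [Module K M]
    [FiniteDimensional K M] [AddCommGroup N] [Module K N] (f : M →ₗ[K] N) (p : Submodule K M) :
    Module.finrank K (p.map f) + Module.finrank K ↥(p ⊓ LinearMap.ker f) =
      Module.finrank K p := by
  have hker : (p ⊓ LinearMap.ker f).comap p.subtype = LinearMap.ker (f.domRestrict p) := by
    rw [LinearMap.ker_domRestrict, Submodule.comap_inf, Submodule.comap_subtype_self, top_inf_eq]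
  rw [← LinearMap.range_domRestrict, ← (Submodule.comapSubtypeEquivOfLe inf_le_left).finrank_eq,
    hker, LinearMap.finrank_range_add_finrank_ker]

theorem eq_zero_of_eq_neg {K : Type*} [Ring K] [NoZeroDivisors K] [NeZero (2 : K)] {a : K}
    (h : a = -a) : a = 0 := by
  rwa [eq_neg_iff_add_eq_zero, ← two_mul, mul_eq_zero, or_iff_right two_ne_zero] at h

section Antisymmetric

variable (K : Type*) {ι : Type*} [Field K] (rev : ι → ι)

def antisymmForms : Submodule K (ι → K) where
  carrier := {x | ∀ i, x (rev i) = -x i}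
  add_mem' hx hy i := by simp [hx i, hy i, add_comm]
  zero_mem' _ := by simp
  smul_mem' c x hx i := by simp [hx i]

variable {K rev}

theorem mem_antisymmForms {x : ι → K} : x ∈ antisymmForms K rev ↔ ∀ i, x (rev i) = -x i :=
  Iff.rfl

theorem sum_eq_zero_of_mem_antisymmForms [Fintype ι] [NeZero (2 : K)] (hrev : rev.Involutive)
    {x : ι → K} (hx : x ∈ antisymmForms K rev) : ∑ i, x i = 0 := by
  refine eq_zero_of_eq_neg ?_
  rw [← Finset.sum_neg_distrib, ← Equiv.sum_comp (hrev.toPerm rev) x]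
  exact Finset.sum_congr rfl fun i _ => hx i

theorem exists_mem_antisymmForms_mul_self_eq_one [Finite ι] (hrev : rev.Involutive)
    (hne : ∀ i, rev i ≠ i) : ∃ σ ∈ antisymmForms K rev, σ * σ = 1 := by
  have := Fintype.ofFinite ι
  let := LinearOrder.lift' _ (Fintype.equivFin ι).injective
  refine ⟨fun i => if i < rev i then 1 else -1, fun i => ?_, funext fun i => ?_⟩
  · rcases (hne i).lt_or_gt with h | h <;> simp [h, h.not_gt, hrev i]
  · simp only [Pi.mul_apply, Pi.one_apply]
    split_ifs <;> simp

theorem single_sub_single_mem_antisymmForms [DecidableEq ι] (hrev : rev.Involutive) (j : ι) :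
    Pi.single j 1 - Pi.single (rev j) 1 ∈ antisymmForms K rev := fun i => by
  have hj : rev i = j ↔ i = rev j := ⟨fun h => h ▸ (hrev i).symm, fun h => h ▸ hrev j⟩
  simp only [Pi.sub_apply, Pi.single_apply, hj, hrev.injective.eq_iff]
  ring

theorem disjoint_span_const_one_antisymmForms [NeZero (2 : K)] :
    Disjoint (K ∙ fun _ : ι => (1 : K)) (antisymmForms K rev) := by
  rw [Submodule.disjoint_def]
  rintro _ hx hxA
  obtain ⟨a, rfl⟩ := Submodule.mem_span_singleton.mp hx
  ext i
  have := hxA i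
  simp only [Pi.smul_apply, smul_eq_mul, mul_one, Pi.zero_apply] at this ⊢
  exact eq_zero_of_eq_neg this

theorem range_id_sub_funLeft [NeZero (2 : K)] (hrev : rev.Involutive) :
    LinearMap.range (LinearMap.id - LinearMap.funLeft K K rev) = antisymmForms K rev := by
  refine le_antisymm ?_ fun y hy => ⟨(2 : K)⁻¹ • y, funext fun i => ?_⟩
  · rintro _ ⟨x, rfl⟩ i
    simp [hrev i]
  · have := two_ne_zero (α := K)
    simp only [LinearMap.sub_apply, LinearMap.id_apply, LinearMap.funLeft_apply, Pi.sub_apply,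
      Pi.smul_apply, smul_eq_mul, hy i]
    field_simp
    ring

theorem two_mul_finrank_antisymmForms [Fintype ι] [NeZero (2 : K)] (hrev : rev.Involutive)
    (hne : ∀ i, rev i ≠ i) : 2 * Module.finrank K (antisymmForms K rev) = Fintype.card ι := by
  obtain ⟨σ, hσ, hσσ⟩ := exists_mem_antisymmForms_mul_self_eq_one (K := K) hrev hne
  set T := LinearMap.id - LinearMap.funLeft K K rev
  have hinv : Function.Involutive (LinearMap.mulLeft K σ) := fun x => by
    simp [← mul_assoc, hσσ]
  let e := LinearEquiv.ofInvolutive _ hinv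
  have hmap : (LinearMap.ker T).map e.toLinearMap = antisymmForms K rev := by
    refine le_antisymm ?_ fun y hy => ⟨σ * y, ?_, hinv y⟩
    · rintro _ ⟨x, hx, rfl⟩ i
      have hxi : x (rev i) = x i := (sub_eq_zero.mp (congrFun hx i)).symm
      simp [e, hσ i, hxi]
    · ext i
      simp [T, hσ i, hy i]
  rw [← Module.finrank_fintype_fun_eq_card K, ← T.finrank_range_add_finrank_ker,
    range_id_sub_funLeft hrev, ← hmap, LinearEquiv.finrank_map_eq, two_mul]

end Antisymmetric

section Graph

def inMean (t : E → V) (x : E → ℂ) (v : V) : ℂ :=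
  (deg t v : ℂ)⁻¹ * (incMat t *ᵥ x) v

variable {s t : E → V} {rev : E → E}

theorem incMat_mulVec_apply (x : E → ℂ) (v : V) :
    (incMat t *ᵥ x) v = ∑ e with t e = v, x e := by
  simp [incMat, mulVec, dotProduct, Finset.sum_filter]

theorem incMat_mulVec_single (e : E) : incMat t *ᵥ Pi.single e 1 = Pi.single (t e) 1 := by
  ext v
  simp [incMat, Pi.single_apply, eq_comm]

theorem incMat_transpose_mulVec (y : V → ℂ) : (incMat t)ᵀ *ᵥ y = y ∘ t := by
  ext e
  simp [incMat, mulVec, dotProduct]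

theorem revMat_mulVec (x : E → ℂ) : revMat rev *ᵥ x = x ∘ rev := by
  ext e
  simp [revMat, mulVec, dotProduct]

theorem inv_degMat (hd : ∀ v, 0 < deg t v) :
    (degMat t)⁻¹ = diagonal fun v => (deg t v : ℂ)⁻¹ := by
  refine inv_eq_right_inv ?_
  rw [degMat, diagonal_mul_diagonal, ← diagonal_one]
  exact congrArg diagonal (funext fun v => mul_inv_cancel₀ (Nat.cast_ne_zero.mpr (hd v).ne'))

theorem sum_incMat_mulVec (x : E → ℂ) : ∑ v, (incMat t *ᵥ x) v = ∑ e, x e := by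
  simp_rw [incMat_mulVec_apply]
  exact Finset.sum_fiberwise _ _ _

theorem incMat_mulVec_const (c : ℂ) (v : V) : (incMat t *ᵥ fun _ => c) v = deg t v * c := by
  simp [incMat_mulVec_apply, deg]

theorem deg_mul_inMean (hd : ∀ v, 0 < deg t v) (x : E → ℂ) (v : V) :
    deg t v * inMean t x v = (incMat t *ᵥ x) v :=
  mul_inv_cancel_left₀ (Nat.cast_ne_zero.mpr (hd v).ne') _

theorem sum_deg : ∑ v, (deg t v : ℂ) = Fintype.card E := by
  simpa [incMat_mulVec_const] using sum_incMat_mulVec (t := t) fun _ => (1 : ℂ)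

theorem inMean_const (hd : ∀ v, 0 < deg t v) (c : ℂ) : inMean t (fun _ => c) = fun _ => c := by
  ext v
  rw [inMean, incMat_mulVec_const]
  exact inv_mul_cancel_left₀ (Nat.cast_ne_zero.mpr (hd v).ne') c

theorem bondS_mulVec (hd : ∀ v, 0 < deg t v) (x : E → ℂ) :
    bondS s t rev *ᵥ x = (2 : ℂ) • (inMean t x ∘ s) - x ∘ rev := by
  rw [bondS, sub_mulVec, smul_mulVec, ← mulVec_mulVec, ← mulVec_mulVec, incMat_transpose_mulVec,
    revMat_mulVec, inv_degMat hd]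
  ext e
  simp only [Pi.sub_apply, Pi.smul_apply, Function.comp_apply, mulVec_diagonal, inMean]

theorem mem_ker_bondS_sub_one_iff (hd : ∀ v, 0 < deg t v) {x : E → ℂ} :
    x ∈ LinearMap.ker (mulVecLin (bondS s t rev - 1)) ↔
      ∀ e, x e + x (rev e) = 2 * inMean t x (s e) := by
  simp only [LinearMap.mem_ker, mulVecLin_apply, sub_mulVec, one_mulVec, bondS_mulVec hd,
    funext_iff]
  refine forall_congr' fun e => ?_
  simp only [Pi.sub_apply, Pi.smul_apply, Function.comp_apply, Pi.zero_apply]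
  constructor <;> intro h <;> linear_combination -h

theorem ker_revMat_add_one :
    LinearMap.ker (mulVecLin (revMat rev + 1)) = antisymmForms ℂ rev := by
  ext x
  simp only [LinearMap.mem_ker, mulVecLin_apply, add_mulVec, one_mulVec, revMat_mulVec,
    mem_antisymmForms, funext_iff, Function.comp_apply, add_eq_zero_iff_eq_neg, Pi.neg_apply]

theorem incMat_mulVec_of_mem_antisymmForms (hrev : rev.Involutive) (hsr : ∀ e, s (rev e) = t e)
    {x : E → ℂ} (hx : x ∈ antisymmForms ℂ rev) : incMat s *ᵥ x = -(incMat t *ᵥ x) := by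
  ext v
  simp only [incMat_mulVec_apply, Pi.neg_apply, Finset.sum_filter]
  rw [← Equiv.sum_comp (hrev.toPerm rev), ← Finset.sum_neg_distrib]
  refine Finset.sum_congr rfl fun e _ => ?_
  by_cases h : t e = v <;> simp [h, hsr, hx e]

theorem laplacian_mulVec_of_mem_antisymmForms (hrev : rev.Involutive) (hsr : ∀ e, s (rev e) = t e)
    (hd : ∀ v, 0 < deg t v) {x : E → ℂ} (hx : x ∈ antisymmForms ℂ rev) :
    (((incMat t)ᵀ - (incMat s)ᵀ) * (degMat t)⁻¹ * (incMat t - incMat s)) *ᵥ x =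
      (2 : ℂ) • (inMean t x ∘ t - inMean t x ∘ s) := by
  rw [← mulVec_mulVec, ← mulVec_mulVec, sub_mulVec (incMat t),
    incMat_mulVec_of_mem_antisymmForms hrev hsr hx, sub_mulVec, incMat_transpose_mulVec,
    incMat_transpose_mulVec, inv_degMat hd]
  ext e
  simp only [Pi.sub_apply, Pi.smul_apply, Function.comp_apply, mulVec_diagonal, inMean,
    Pi.neg_apply, smul_eq_mul]
  ring

theorem incMat_mulVec_eq_zero_of_inMean_eq (hrev : rev.Involutive) (hd : ∀ v, 0 < deg t v)
    {x : E → ℂ} (hx : x ∈ antisymmForms ℂ rev) (hc : ∀ v w, inMean t x v = inMean t x w) :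
    incMat t *ᵥ x = 0 := by
  ext v
  have hE : (Fintype.card E : ℂ) ≠ 0 := by
    have : deg t v ≤ Fintype.card E := Finset.card_le_univ _
    exact_mod_cast ((hd v).trans_le this).ne'
  have hsum : (Fintype.card E : ℂ) * inMean t x v = 0 := by
    rw [← sum_deg (t := t), Finset.sum_mul, ← sum_eq_zero_of_mem_antisymmForms hrev hx,
      ← sum_incMat_mulVec (t := t)]
    exact Finset.sum_congr rfl fun w _ => by rw [hc v w, deg_mul_inMean hd]
  rw [← deg_mul_inMean hd, (mul_eq_zero.mp hsum).resolve_left hE, mul_zero, Pi.zero_apply]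

theorem eq_of_reflTransGen {α : Type*} {g : V → α} (hg : ∀ e, g (s e) = g (t e)) {a b : V}
    (h : Relation.ReflTransGen (fun p q => ∃ e, s e = p ∧ t e = q) a b) : g a = g b := by
  have := h.lift g fun _ _ ⟨e, hp, hq⟩ => hp ▸ hq ▸ hg e
  rwa [Relation.reflTransGen_eq_self] at this

theorem antisymmForms_inf_ker_laplacian (hrev : rev.Involutive) (hsr : ∀ e, s (rev e) = t e)
    (hd : ∀ v, 0 < deg t v)
    (hconn : ∀ a b : V, Relation.ReflTransGen (fun p q => ∃ e, s e = p ∧ t e = q) a b) :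
    antisymmForms ℂ rev ⊓ LinearMap.ker
        (mulVecLin (((incMat t)ᵀ - (incMat s)ᵀ) * (degMat t)⁻¹ * (incMat t - incMat s))) =
      antisymmForms ℂ rev ⊓ LinearMap.ker (mulVecLin (incMat t)) := by
  ext x
  simp only [Submodule.mem_inf, LinearMap.mem_ker, mulVecLin_apply]
  refine and_congr_right fun hx => ?_
  rw [laplacian_mulVec_of_mem_antisymmForms hrev hsr hd hx, smul_eq_zero,
    or_iff_right two_ne_zero, sub_eq_zero]
  constructor
  · intro h
    have hg : ∀ e, inMean t x (s e) = inMean t x (t e) := fun e => (congrFun h e).symm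
    exact incMat_mulVec_eq_zero_of_inMean_eq hrev hd hx fun v w =>
      eq_of_reflTransGen hg (hconn v w)
  · intro h
    ext e
    simp [inMean, h]

theorem ker_bondS_sub_one [Nonempty V] (hrev : rev.Involutive) (hsr : ∀ e, s (rev e) = t e)
    (hd : ∀ v, 0 < deg t v)
    (hconn : ∀ a b : V, Relation.ReflTransGen (fun p q => ∃ e, s e = p ∧ t e = q) a b) :
    LinearMap.ker (mulVecLin (bondS s t rev - 1)) =
      Submodule.span ℂ {fun _ => 1} ⊔
        (antisymmForms ℂ rev ⊓ LinearMap.ker (mulVecLin (incMat t))) := by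
  refine le_antisymm (fun x hx => ?_) (sup_le ?_ fun y ⟨hyA, hyδ⟩ => ?_)
  · rw [mem_ker_bondS_sub_one_iff hd] at hx
    have hmean : ∀ e, inMean t x (s e) = inMean t x (t e) := fun e => by
      have := hx (rev e)
      rw [hrev e, hsr e] at this
      linear_combination (this - hx e) / 2
    set c := inMean t x (Classical.arbitrary V)
    have hc : ∀ v, inMean t x v = c := fun v => eq_of_reflTransGen hmean (hconn v _)
    refine Submodule.mem_sup.mpr ⟨c • fun _ => 1,
      Submodule.smul_mem _ _ (Submodule.mem_span_singleton_self _), x - c • fun _ => 1,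
      Submodule.mem_inf.mpr ⟨fun e => ?_, ?_⟩, add_sub_cancel _ _⟩
    · simp only [Pi.sub_apply, Pi.smul_apply, smul_eq_mul, mul_one]
      linear_combination hx e + 2 * hc (s e)
    · rw [LinearMap.mem_ker, mulVecLin_apply, mulVec_sub, mulVec_smul]
      ext v
      rw [Pi.sub_apply, Pi.smul_apply, incMat_mulVec_const, ← deg_mul_inMean hd, hc, smul_eq_mul,
        mul_one, Pi.zero_apply, mul_comm, sub_self]
  · rw [Submodule.span_singleton_le_iff_mem, mem_ker_bondS_sub_one_iff hd, inMean_const hd]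
    intro e
    norm_num
  · rw [mem_ker_bondS_sub_one_iff hd]
    have hyδ : incMat t *ᵥ y = 0 := hyδ
    intro e
    simp [hyA e, inMean, hyδ]

theorem single_sub_single_mem_map_incMat (hrev : rev.Involutive) (htr : ∀ e, t (rev e) = s e)
    {a b : V} (h : Relation.ReflTransGen (fun p q => ∃ e, s e = p ∧ t e = q) a b) :
    Pi.single b 1 - Pi.single a 1 ∈ (antisymmForms ℂ rev).map (mulVecLin (incMat t)) := by
  induction h with
  | refl => simp
  | tail _ hpq ih =>
    obtain ⟨e, rfl, rfl⟩ := hpq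
    have hdiv : incMat t *ᵥ (Pi.single e 1 - Pi.single (rev e) 1) =
        Pi.single (t e) 1 - Pi.single (s e) 1 := by
      rw [mulVec_sub, incMat_mulVec_single, incMat_mulVec_single, htr]
    convert add_mem ih ⟨_, single_sub_single_mem_antisymmForms hrev e, hdiv⟩ using 1
    abel

theorem map_incMat_antisymmForms [Nonempty V] (hrev : rev.Involutive) (htr : ∀ e, t (rev e) = s e)
    (hconn : ∀ a b : V, Relation.ReflTransGen (fun p q => ∃ e, s e = p ∧ t e = q) a b) :
    (antisymmForms ℂ rev).map (mulVecLin (incMat t)) =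
      LinearMap.ker (∑ v : V, LinearMap.proj v) := by
  refine le_antisymm ?_ fun g hg => ?_
  · rintro _ ⟨x, hx, rfl⟩
    simpa [sum_incMat_mulVec] using sum_eq_zero_of_mem_antisymmForms hrev hx
  · have hg : ∑ v, g v = 0 := by simpa using hg
    set v₀ := Classical.arbitrary V
    have : g = ∑ v, g v • (Pi.single v 1 - Pi.single v₀ 1) := by
      simp [smul_sub, Finset.sum_sub_distrib, ← Finset.sum_smul, hg, ← pi_eq_sum_univ']
    rw [this]
    exact Submodule.sum_mem _ fun v _ =>
      Submodule.smul_mem _ _ (single_sub_single_mem_map_incMat hrev htr (hconn v₀ v))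

theorem finrank_antisymmForms_inf_ker_incMat_add_card [Nonempty V] (hrev : rev.Involutive)
    (htr : ∀ e, t (rev e) = s e)
    (hconn : ∀ a b : V, Relation.ReflTransGen (fun p q => ∃ e, s e = p ∧ t e = q) a b) :
    Module.finrank ℂ ↥(antisymmForms ℂ rev ⊓ LinearMap.ker (mulVecLin (incMat t))) +
      Fintype.card V = Module.finrank ℂ (antisymmForms ℂ rev) + 1 := by
  have hrank := finrank_map_add_finrank_inf_ker (mulVecLin (incMat t)) (antisymmForms ℂ rev)
  rw [map_incMat_antisymmForms hrev htr hconn] at hrank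
  have hsum : (∑ v : V, LinearMap.proj v : (V → ℂ) →ₗ[ℂ] ℂ) ≠ 0 := fun h => by
    simpa using LinearMap.congr_fun h (Pi.single (Classical.arbitrary V) 1)
  have := Module.Dual.finrank_ker_add_one_of_ne_zero hsum
  rw [Module.finrank_fintype_fun_eq_card] at this
  omega

end Graph

/-- The eigenspace of `S` for eigenvalue `1` has dimension `β + 1 = m − n + 2`
(stated additively), and it is spanned by the all-ones vector together with the
τ-antisymmetric harmonic 1-forms. -/
theorem stmt11 [Nonempty V] (s t : E → V) (rev : E → E)
    (hrev : Function.Involutive rev) (hne : ∀ e, rev e ≠ e)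
    (hsr : ∀ e, s (rev e) = t e) (htr : ∀ e, t (rev e) = s e)
    (hd : ∀ v, 0 < deg t v)
    (hconn : ∀ a b : V, Relation.ReflTransGen (fun p q => ∃ e, s e = p ∧ t e = q) a b) :
    Module.finrank ℂ ↥(LinearMap.ker (Matrix.mulVecLin (bondS s t rev - 1)))
        + Fintype.card V = Fintype.card E / 2 + 2 ∧
    LinearMap.ker (Matrix.mulVecLin (bondS s t rev - 1))
      = Submodule.span ℂ {(fun _ => 1 : E → ℂ)} ⊔
        (LinearMap.ker (Matrix.mulVecLin (revMat rev + 1)) ⊓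
          LinearMap.ker (Matrix.mulVecLin
            (((incMat t).transpose - (incMat s).transpose) * (degMat t)⁻¹ *
              (incMat t - incMat s)))) := by
  rw [ker_revMat_add_one, antisymmForms_inf_ker_laplacian hrev hsr hd hconn]
  have hK := ker_bondS_sub_one hrev hsr hd hconn
  refine ⟨?_, hK⟩
  have : Nonempty E := ⟨(Finset.card_pos.mp (hd (Classical.arbitrary V))).choose⟩
  have hone : Module.finrank ℂ (Submodule.span ℂ {fun _ : E => (1 : ℂ)}) = 1 :=
    finrank_span_singleton (Function.const_ne_zero.mpr one_ne_zero)
  have hdisj := (disjoint_span_const_one_antisymmForms (K := ℂ) (rev := rev)).mono_right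
    (inf_le_left (b := LinearMap.ker (mulVecLin (incMat t))))
  have hsup := Submodule.finrank_sup_add_finrank_inf_eq
    (Submodule.span ℂ {fun _ : E => (1 : ℂ)})
    (antisymmForms ℂ rev ⊓ LinearMap.ker (mulVecLin (incMat t)))
  rw [hdisj.eq_bot, finrank_bot, ← hK, hone] at hsup
  have := finrank_antisymmForms_inf_ker_incMat_add_card hrev htr hconn
  have := two_mul_finrank_antisymmForms (K := ℂ) hrev hne
  omega
end
end

section
/- Assume the matrix 1 + Φ τ̂ is invertible, where Φ is a block-diagonal invertible 4m×4m matrix and τ̂ = τ ⊗ 1₂. Then det(1 − Φ Ŝ) = det(1 + Φ τ̂) · (det D)^{-2} · det( δ̂_t* (2(1 + Φ τ̂)^{-1} − 1) δ̂_t ), where Ŝ = S ⊗ 1₂, δ̂_t = δ_t ⊗ 1₂, and S = 2 δ_s D^{-1} δ_t* − τ. -/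
/-!
With `A = 1 + Φ τ̂`, the relation `τ δ_t = δ_s` gives `Φ δ̂_s = (A - 1) δ̂_t`, so
`1 - Φ Ŝ = A - 2 (A - 1) δ̂_t D̂⁻¹ δ̂_t*` where `D̂ = δ̂_t* δ̂_t`. Factoring out `A` and moving
`D̂⁻¹ δ̂_t*` to the front by Sylvester's identity `det (1 + U W) = det (1 + W U)` leaves the vertex
matrix `1 - 2 D̂⁻¹ δ̂_t* (1 - A⁻¹) δ̂_t = D̂⁻¹ δ̂_t* (2 A⁻¹ - 1) δ̂_t`, and `det D̂ = (det D)²`.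
-/

open Matrix BigOperators
open scoped Classical Kronecker

noncomputable section

variable {V E : Type*} [Fintype V] [Fintype E] [DecidableEq V] [DecidableEq E]

theorem Matrix.sub_kronecker {R l m n p : Type*} [NonUnitalNonAssocRing R]
    (A B : Matrix l m R) (C : Matrix n p R) : (A - B) ⊗ₖ C = A ⊗ₖ C - B ⊗ₖ C := by
  ext ⟨i, k⟩ ⟨j, l⟩
  simp [sub_mul]

theorem Matrix.det_sub_two_smul_mul_inv_mul {K m n : Type*} [Field K] [Fintype m] [DecidableEq m]
    [Fintype n] [DecidableEq n] (A : Matrix n n K) (P : Matrix n m K) (Q : Matrix m n K)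
    (hA : IsUnit A.det) (hQP : IsUnit (Q * P).det) :
    (A - (2 : K) • ((A - 1) * P * (Q * P)⁻¹ * Q)).det
      = A.det * (Q * P).det⁻¹ * (Q * ((2 : K) • A⁻¹ - 1) * P).det := by
  have hcompress : 1 + (Q * P)⁻¹ * Q * A⁻¹ * -((2 : K) • ((A - 1) * P))
      = (Q * P)⁻¹ * (Q * ((2 : K) • A⁻¹ - 1) * P) := by
    have hAA : A⁻¹ * (A - 1) = 1 - A⁻¹ := by
      rw [Matrix.mul_sub, Matrix.nonsing_inv_mul _ hA, Matrix.mul_one]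
    have hDD : (Q * P)⁻¹ * (Q * P) = 1 := Matrix.nonsing_inv_mul _ hQP
    calc 1 + (Q * P)⁻¹ * Q * A⁻¹ * -((2 : K) • ((A - 1) * P))
        = 1 - (2 : K) • ((Q * P)⁻¹ * Q * (A⁻¹ * (A - 1)) * P) := by
          simp only [Matrix.mul_neg, Matrix.mul_smul, Matrix.mul_assoc, sub_eq_add_neg]
      _ = (2 : K) • ((Q * P)⁻¹ * Q * A⁻¹ * P) - (Q * P)⁻¹ * (Q * P) := by
          rw [hAA]
          simp only [Matrix.mul_sub, Matrix.sub_mul, Matrix.mul_one, Matrix.mul_assoc]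
          rw [hDD]
          module
      _ = (Q * P)⁻¹ * (Q * ((2 : K) • A⁻¹ - 1) * P) := by
          simp only [Matrix.mul_sub, Matrix.sub_mul, Matrix.mul_smul, Matrix.smul_mul,
            Matrix.mul_one, Matrix.mul_assoc]
  have hsplit : A - (2 : K) • ((A - 1) * P * (Q * P)⁻¹ * Q)
      = A + -((2 : K) • ((A - 1) * P)) * ((Q * P)⁻¹ * Q) := by
    rw [Matrix.neg_mul, Matrix.smul_mul, ← sub_eq_add_neg, Matrix.mul_assoc _ _ Q]
  rw [hsplit, Matrix.det_add_mul _ _ hA, hcompress, Matrix.det_mul, Matrix.det_nonsing_inv,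
    Ring.inverse_eq_inv', mul_assoc]

omit [Fintype V] in
theorem revMat_mul_transpose_incMat {s t : E → V} {rev : E → E}
    (htr : ∀ e, t (rev e) = s e) : revMat rev * (incMat t)ᵀ = (incMat s)ᵀ := by
  ext e v
  rw [Matrix.mul_apply, Finset.sum_eq_single (rev e)]
  · simp [revMat, incMat, htr e]
  · intro f _ hf
    simp [revMat, hf]
  · simp

omit [Fintype V] [DecidableEq E] in
theorem incMat_mul_transpose_incMat (t : E → V) : incMat t * (incMat t)ᵀ = degMat t := by
  ext v w
  by_cases h : v = w
  · subst h
    simp +contextual [Matrix.mul_apply, incMat, degMat, deg]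
  · simp +contextual [Matrix.mul_apply, incMat, degMat, h, Ne.symm h]

omit [DecidableEq E] in
theorem det_degMat_ne_zero {t : E → V} (hd : ∀ v, 0 < deg t v) : (degMat t).det ≠ 0 := by
  rw [degMat, Matrix.det_diagonal]
  exact Finset.prod_ne_zero_iff.2 fun v _ => Nat.cast_ne_zero.2 (hd v).ne'

theorem bondS_kronecker_one {ι : Type*} [Fintype ι] [DecidableEq ι] {s t : E → V} {rev : E → E}
    (htr : ∀ e, t (rev e) = s e) :
    bondS s t rev ⊗ₖ (1 : Matrix ι ι ℂ)
      = (2 : ℂ) • ((revMat rev ⊗ₖ (1 : Matrix ι ι ℂ)) * ((incMat t)ᵀ ⊗ₖ (1 : Matrix ι ι ℂ))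
          * ((incMat t ⊗ₖ (1 : Matrix ι ι ℂ)) * ((incMat t)ᵀ ⊗ₖ (1 : Matrix ι ι ℂ)))⁻¹
          * (incMat t ⊗ₖ (1 : Matrix ι ι ℂ)))
        - revMat rev ⊗ₖ (1 : Matrix ι ι ℂ) := by
  simp only [← Matrix.mul_kronecker_mul, Matrix.mul_one, Matrix.inv_kronecker, inv_one,
    incMat_mul_transpose_incMat, revMat_mul_transpose_incMat htr, ← Matrix.smul_kronecker,
    ← Matrix.sub_kronecker, bondS]

theorem stmt19_general (s t : E → V) (rev : E → E)
    (htr : ∀ e, t (rev e) = s e)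
    (hd : ∀ v, 0 < deg t v)
    (Φ : Matrix (E × Fin 2) (E × Fin 2) ℂ)
    (hinv : IsUnit (1 + Φ * (revMat rev ⊗ₖ (1 : Matrix (Fin 2) (Fin 2) ℂ)))) :
    (1 - Φ * (bondS s t rev ⊗ₖ (1 : Matrix (Fin 2) (Fin 2) ℂ))).det
      = (1 + Φ * (revMat rev ⊗ₖ (1 : Matrix (Fin 2) (Fin 2) ℂ))).det
        * ((degMat t).det ^ 2)⁻¹
        * ((incMat t ⊗ₖ (1 : Matrix (Fin 2) (Fin 2) ℂ))
            * ((2 : ℂ) • (1 + Φ * (revMat rev ⊗ₖ (1 : Matrix (Fin 2) (Fin 2) ℂ)))⁻¹ - 1)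
            * ((incMat t).transpose ⊗ₖ (1 : Matrix (Fin 2) (Fin 2) ℂ))).det := by
  set A := 1 + Φ * (revMat rev ⊗ₖ (1 : Matrix (Fin 2) (Fin 2) ℂ))
  set P := (incMat t)ᵀ ⊗ₖ (1 : Matrix (Fin 2) (Fin 2) ℂ)
  set Q := incMat t ⊗ₖ (1 : Matrix (Fin 2) (Fin 2) ℂ)
  have hQP : (Q * P).det = (degMat t).det ^ 2 := by
    rw [← Matrix.mul_kronecker_mul, incMat_mul_transpose_incMat, Matrix.mul_one,
      Matrix.det_kronecker, Matrix.det_one, one_pow, mul_one, Fintype.card_fin]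
  have hS : 1 - Φ * (bondS s t rev ⊗ₖ 1) = A - (2 : ℂ) • ((A - 1) * P * (Q * P)⁻¹ * Q) := by
    rw [bondS_kronecker_one htr, add_sub_cancel_left]
    simp only [Matrix.mul_sub, Matrix.mul_smul, Matrix.mul_assoc, A]
    abel
  rw [hS, Matrix.det_sub_two_smul_mul_inv_mul A P Q ((Matrix.isUnit_iff_isUnit_det A).1 hinv)
    (hQP ▸ (pow_ne_zero 2 (det_degMat_ne_zero hd)).isUnit), hQP]

/-- Ihara-style factorization of the bond secular determinant:
`det(1 − Φ Ŝ) = det(1 + Φ τ̂) · (det D)⁻² · det(δ̂_t* (2(1 + Φ τ̂)⁻¹ − 1) δ̂_t)`. -/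
theorem stmt19 (s t : E → V) (rev : E → E) (hrev : Function.Involutive rev)
    (hne : ∀ e, rev e ≠ e)
    (hsr : ∀ e, s (rev e) = t e) (htr : ∀ e, t (rev e) = s e)
    (hd : ∀ v, 0 < deg t v)
    (Φ : Matrix (E × Fin 2) (E × Fin 2) ℂ)
    (hblock : ∀ a b : E × Fin 2, a.1 ≠ b.1 → Φ a b = 0)
    (hΦ : IsUnit Φ)
    (hinv : IsUnit (1 + Φ * (revMat rev ⊗ₖ (1 : Matrix (Fin 2) (Fin 2) ℂ)))) :
    (1 - Φ * (bondS s t rev ⊗ₖ (1 : Matrix (Fin 2) (Fin 2) ℂ))).det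
      = (1 + Φ * (revMat rev ⊗ₖ (1 : Matrix (Fin 2) (Fin 2) ℂ))).det
        * ((degMat t).det ^ 2)⁻¹
        * ((incMat t ⊗ₖ (1 : Matrix (Fin 2) (Fin 2) ℂ))
            * ((2 : ℂ) • (1 + Φ * (revMat rev ⊗ₖ (1 : Matrix (Fin 2) (Fin 2) ℂ)))⁻¹ - 1)
            * ((incMat t).transpose ⊗ₖ (1 : Matrix (Fin 2) (Fin 2) ℂ))).det :=
  stmt19_general s t rev htr hd Φ hinv
end
end
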